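/- arXiv:2307.04126 — 2 statements merged into one kernel-verified Lean document; each statement's English description precedes it below -/
import Mathlib

section
/- Let f : S² → ℝ be a smooth positive function with Δf ≤ f, and let K > 0 be a regular value of f. Define the truncation f̄^K = min(f, K). Then for every nonnegative u ∈ W^{1,2}(S²), one has −∫_{S²} ⟨∇u, ∇f̄^K⟩ dvol ≤ ∫_{S²} u · f̄^K dvol. -/
open Real MeasureTheory intervalIntegral

/- We work on the unit round sphere `S²` in geodesic polar coordinates `(r, θ)` centered at a
point `p`.  A smooth function `f` on `S²` is represented by `F : ℝ → ℝ → ℝ`, which is smooth,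
`2π`-periodic in `θ`, and constant in `θ` at the poles `r = 0, π`. -/

/-- The Laplace–Beltrami operator on the round `S²` (trace of the Hessian, no negative sign),
in geodesic polar coordinates. -/
noncomputable def sphLap (F : ℝ → ℝ → ℝ) (r θ : ℝ) : ℝ :=
  deriv (fun s => deriv (fun s' => F s' θ) s) r
    + (Real.cos r / Real.sin r) * deriv (fun s => F s θ) r
    + (1 / Real.sin r ^ 2) * deriv (deriv (F r)) θ

/-- The spherical mean `⨍_{∂B_r(p)} f ds = (∫_0^{2π} F(r,θ) dθ) / (2π)` (the circle `∂B_r(p)`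
has length `2π sin r` and line element `sin r dθ`). -/
noncomputable def circleAvg (F : ℝ → ℝ → ℝ) (r : ℝ) : ℝ :=
  (∫ θ in (0:ℝ)..(2*π), F r θ) / (2*π)

/-- The integral of a function over `S²` with the round area element `sin r dr dθ`. -/
noncomputable def sphereIntegral (G : ℝ → ℝ → ℝ) : ℝ :=
  ∫ r in (0:ℝ)..π, ∫ θ in (0:ℝ)..(2*π), G r θ * Real.sin r

/-- The `L²(S²)` norm of a function. -/
noncomputable def sphereL2 (F : ℝ → ℝ → ℝ) : ℝ :=
  Real.sqrt (sphereIntegral (fun r θ => (F r θ)^2))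
/- Note: Mathlib has no Sobolev spaces; since smooth functions are dense in `W^{1,2}(S²)` and
both sides of the inequality are continuous in the `W^{1,2}` topology, we quantify over smooth
nonnegative test functions `u` on `S²`.  The truncation `f̄^K = min(f, K)` is Lipschitz, and its
(weak) gradient is computed by `deriv` of the truncation a.e. -/


open Filter Set

noncomputable def twiPdr (G : ℝ × ℝ → ℝ) : ℝ × ℝ → ℝ := fun p => fderiv ℝ G p (1, 0)
noncomputable def twiPdt (G : ℝ × ℝ → ℝ) : ℝ × ℝ → ℝ := fun p => fderiv ℝ G p (0, 1)

lemma twi_contDiff_pdr {G : ℝ × ℝ → ℝ} (hG : ContDiff ℝ (⊤ : ℕ∞) G) : ContDiff ℝ (⊤ : ℕ∞) (twiPdr G) :=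
  (hG.fderiv_right (by simp)).clm_apply contDiff_const

lemma twi_contDiff_pdt {G : ℝ × ℝ → ℝ} (hG : ContDiff ℝ (⊤ : ℕ∞) G) : ContDiff ℝ (⊤ : ℕ∞) (twiPdt G) :=
  (hG.fderiv_right (by simp)).clm_apply contDiff_const

lemma twi_hasDerivAt_pdr {G : ℝ × ℝ → ℝ} (hG : ContDiff ℝ (⊤ : ℕ∞) G) (r θ : ℝ) :
    HasDerivAt (fun s => G (s, θ)) (twiPdr G (r, θ)) r := by
  have h1 : HasDerivAt (fun s : ℝ => (s, θ)) ((1:ℝ), (0:ℝ)) r :=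
    (hasDerivAt_id r).prodMk (hasDerivAt_const r θ)
  exact ((hG.differentiable (by simp) (r, θ)).hasFDerivAt).comp_hasDerivAt r h1

lemma twi_hasDerivAt_pdt {G : ℝ × ℝ → ℝ} (hG : ContDiff ℝ (⊤ : ℕ∞) G) (r θ : ℝ) :
    HasDerivAt (fun t => G (r, t)) (twiPdt G (r, θ)) θ := by
  have h1 : HasDerivAt (fun t : ℝ => (r, t)) ((0:ℝ), (1:ℝ)) θ :=
    (hasDerivAt_const θ r).prodMk (hasDerivAt_id θ)
  exact ((hG.differentiable (by simp) (r, θ)).hasFDerivAt).comp_hasDerivAt θ h1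

noncomputable def twiQ (K ε t : ℝ) : ℝ := Real.sqrt ((t - K)^2 + ε^2)
noncomputable def twiPhi (K ε t : ℝ) : ℝ := (t + K - twiQ K ε t) / 2
noncomputable def twiPhi' (K ε t : ℝ) : ℝ := (1 - (t - K) / twiQ K ε t) / 2
noncomputable def twiPhi'' (K ε t : ℝ) : ℝ := -(ε^2 / (2 * twiQ K ε t ^ 3))

variable {K ε t : ℝ}

lemma twiQ_pos (hε : 0 < ε) : 0 < twiQ K ε t :=
  Real.sqrt_pos.2 (by positivity)

lemma twiQ_sq (hε : 0 < ε) : twiQ K ε t ^ 2 = (t - K)^2 + ε^2 :=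
  Real.sq_sqrt (by positivity)

lemma twiQ_ge_abs : |t - K| ≤ twiQ K ε t := by
  rw [← Real.sqrt_sq_eq_abs]
  exact Real.sqrt_le_sqrt (by nlinarith [sq_nonneg ε])

lemma twiQ_ge_eps (hε : 0 < ε) : ε ≤ twiQ K ε t := by
  have h1 : ε = Real.sqrt (ε^2) := (Real.sqrt_sq hε.le).symm
  rw [twiQ]
  nth_rewrite 1 [h1]
  exact Real.sqrt_le_sqrt (by nlinarith [sq_nonneg (t - K)])

lemma twiQ_le (hε : 0 < ε) : twiQ K ε t ≤ |t - K| + ε := by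
  rw [twiQ, ← Real.sqrt_sq (by positivity : (0:ℝ) ≤ |t - K| + ε)]
  refine Real.sqrt_le_sqrt ?_
  have : |t - K|^2 = (t - K)^2 := sq_abs _
  nlinarith [abs_nonneg (t - K)]

lemma twiQ_hasDerivAt (hε : 0 < ε) :
    HasDerivAt (twiQ K ε) ((t - K) / twiQ K ε t) t := by
  have hg : HasDerivAt (fun t => (t - K)^2 + ε^2) (2 * (t - K)) t := by
    have := (((hasDerivAt_id t).sub_const K).pow 2).add_const (ε^2)
    simpa [mul_comm] using this
  have := (Real.hasDerivAt_sqrt (by positivity : (t - K)^2 + ε^2 ≠ 0)).comp t hg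
  refine this.congr_deriv (Eq.symm ?_)
  have hq := twiQ_pos (K := K) (t := t) hε
  unfold twiQ at hq ⊢
  field_simp

lemma twiPhi_hasDerivAt (hε : 0 < ε) :
    HasDerivAt (twiPhi K ε) (twiPhi' K ε t) t := by
  have h1 := ((hasDerivAt_id t).add_const K).sub (twiQ_hasDerivAt (K := K) (t := t) hε)
  have h2 := h1.div_const 2
  exact (by simpa using h2 : HasDerivAt (fun x => (x + K - twiQ K ε x) / 2) ((1 - (t - K) / twiQ K ε t) / 2) t)

lemma twiPhi'_hasDerivAt (hε : 0 < ε) :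
    HasDerivAt (twiPhi' K ε) (twiPhi'' K ε t) t := by
  have hq := twiQ_pos (K := K) (t := t) hε
  have hdiv : HasDerivAt (fun t => (t - K) / twiQ K ε t)
      ((1 * twiQ K ε t - (t - K) * ((t - K) / twiQ K ε t)) / twiQ K ε t ^ 2) t :=
    ((hasDerivAt_id t).sub_const K).div (twiQ_hasDerivAt hε) hq.ne'
  have := ((hasDerivAt_const t (1:ℝ)).sub hdiv).div_const 2
  refine this.congr_deriv (Eq.symm ?_)
  have hsq := twiQ_sq (K := K) (t := t) hε
  rw [twiPhi'']
  field_simp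
  linear_combination hsq

lemma twiPhi_contDiff (hε : 0 < ε) : ContDiff ℝ (⊤ : ℕ∞) (twiPhi K ε) := by
  have hq : ContDiff ℝ (⊤ : ℕ∞) (twiQ K ε) := by
    rw [contDiff_iff_contDiffAt]
    intro t
    have hin : ContDiffAt ℝ (⊤ : ℕ∞) (fun t : ℝ => (t - K)^2 + ε^2) t :=
      (((contDiff_id.sub contDiff_const).pow 2).add contDiff_const).contDiffAt
    exact (Real.contDiffAt_sqrt (by positivity)).comp t hin
  exact ((contDiff_id.add contDiff_const).sub hq).div_const 2

lemma twiPhi'_nonneg (hε : 0 < ε) : 0 ≤ twiPhi' K ε t := by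
  have h1 := twiQ_ge_abs (K := K) (ε := ε) (t := t)
  have hq := twiQ_pos (K := K) (t := t) hε
  have : (t - K) / twiQ K ε t ≤ 1 := by
    rw [div_le_one hq]; exact (le_abs_self _).trans h1
  rw [twiPhi']; linarith

lemma twiPhi'_le_one (hε : 0 < ε) : twiPhi' K ε t ≤ 1 := by
  have h1 := twiQ_ge_abs (K := K) (ε := ε) (t := t)
  have hq := twiQ_pos (K := K) (t := t) hε
  have : -1 ≤ (t - K) / twiQ K ε t := by
    rw [neg_le, ← neg_div, div_le_one hq]
    exact (neg_le_abs _).trans h1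
  rw [twiPhi']; linarith

lemma twiPhi''_nonpos (hε : 0 < ε) : twiPhi'' K ε t ≤ 0 := by
  have hq := twiQ_pos (K := K) (t := t) hε
  rw [twiPhi'']
  have : 0 ≤ ε^2 / (2 * twiQ K ε t ^ 3) := by positivity
  linarith

lemma twiPhi_le_min (hε : 0 < ε) : twiPhi K ε t ≤ min t K := by
  have h1 := twiQ_ge_abs (K := K) (ε := ε) (t := t)
  rcases le_total t K with h | h
  · rw [min_eq_left h]; rw [abs_of_nonpos (by linarith)] at h1
    rw [twiPhi]; linarith
  · rw [min_eq_right h]; rw [abs_of_nonneg (by linarith)] at h1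
    rw [twiPhi]; linarith

lemma twi_min_le_phi (hε : 0 < ε) : min t K ≤ twiPhi K ε t + ε / 2 := by
  have h1 := twiQ_le (K := K) (t := t) hε
  rcases le_total t K with h | h
  · rw [min_eq_left h]; rw [abs_of_nonpos (by linarith)] at h1
    rw [twiPhi]; linarith
  · rw [min_eq_right h]; rw [abs_of_nonneg (by linarith)] at h1
    rw [twiPhi]; linarith

lemma twiPhi'_mul_le (hK : 0 < K) (hε : 0 < ε) :
    twiPhi' K ε t * t ≤ twiPhi K ε t + ε / 2 := by
  have hq := twiQ_pos (K := K) (t := t) hε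
  have h1 := twiQ_ge_abs (K := K) (ε := ε) (t := t)
  have h2 := twiQ_ge_eps (K := K) (t := t) hε
  have hsq := twiQ_sq (K := K) (t := t) hε
  have hneg : -(t - K) ≤ twiQ K ε t := (neg_le_abs _).trans h1
  rw [twiPhi', twiPhi]
  rw [div_mul_eq_mul_div, div_add' _ _ _ (two_ne_zero), div_le_div_iff₀ two_pos two_pos]
  have key : -((t - K) * t) ≤ (K + ε - twiQ K ε t) * twiQ K ε t := by
    nlinarith [mul_le_mul_of_nonneg_right hneg hK.le,
      mul_le_mul_of_nonneg_right h2 hε.le]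
  have hdiv : (1 - (t - K) / twiQ K ε t) * t = t - (t - K) * t / twiQ K ε t := by
    ring
  rw [hdiv]
  have : (t - K) * t / twiQ K ε t ≥ -(K + ε - twiQ K ε t) := by
    rw [ge_iff_le, neg_le, ← neg_div, div_le_iff₀ hq]
    linarith [key]
  linarith

lemma twiPhi'_tendsto (ht : t ≠ K) :
    Filter.Tendsto (fun n : ℕ => twiPhi' K (1/(n+1)) t) Filter.atTop
      (nhds (if t < K then 1 else 0)) := by
  have habs : Real.sqrt ((t - K)^2) = |t - K| := Real.sqrt_sq_eq_abs _
  have hne : |t - K| ≠ 0 := abs_ne_zero.2 (sub_ne_zero.2 ht)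
  have hcont : ContinuousAt (fun e : ℝ => (1 - (t - K) / Real.sqrt ((t - K)^2 + e^2)) / 2) 0 := by
    have h1 : ContinuousAt (fun e : ℝ => Real.sqrt ((t - K)^2 + e^2)) 0 :=
      (Real.continuous_sqrt.comp (continuous_const.add (continuous_pow 2))).continuousAt
    have h2 : (fun e : ℝ => Real.sqrt ((t - K)^2 + e^2)) 0 ≠ 0 := by
      simpa [habs] using hne
    exact (((continuousAt_const).sub ((continuousAt_const).div h1 h2)).div continuousAt_const
      two_ne_zero)
  have hn : Filter.Tendsto (fun n : ℕ => (1:ℝ)/(n+1)) Filter.atTop (nhds 0) :=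
    tendsto_one_div_add_atTop_nhds_zero_nat
  have := hcont.tendsto.comp hn
  have heq : (fun n : ℕ => twiPhi' K (1/(n+1)) t)
      = (fun e : ℝ => (1 - (t - K) / Real.sqrt ((t - K)^2 + e^2)) / 2) ∘ (fun n : ℕ => (1:ℝ)/(n+1)) := by
    funext n; simp [twiPhi', twiQ, Function.comp]
  rw [heq]
  convert this using 2
  rcases lt_or_gt_of_ne ht with h | h
  · rw [if_pos h]
    rw [show (0:ℝ)^2 = 0 by norm_num, add_zero, habs, abs_of_neg (by linarith)]
    have : (t - K) / -(t - K) = -1 := by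
      rw [div_neg, div_self (sub_ne_zero.2 ht)]
    rw [this]; norm_num
  · rw [if_neg (not_lt.2 h.le)]
    rw [show (0:ℝ)^2 = 0 by norm_num, add_zero, habs, abs_of_pos (by linarith)]
    rw [div_self (sub_ne_zero.2 ht)]; norm_num

-- (1) below the level: deriv of truncation = deriv
lemma twi_deriv_min_of_lt {f : ℝ → ℝ} {K r d : ℝ} (hf : HasDerivAt f d r) (h : f r < K) :
    deriv (fun s => min (f s) K) r = d := by
  have hev : ∀ᶠ s in nhds r, f s < K :=
    hf.continuousAt.eventually_lt continuousAt_const h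
  have heq : (fun s => min (f s) K) =ᶠ[nhds r] f := by
    filter_upwards [hev] with s hs
    exact min_eq_left hs.le
  rw [heq.deriv_eq]
  exact hf.deriv

-- (2) above the level: deriv of truncation = 0
lemma twi_deriv_min_of_gt {f : ℝ → ℝ} {K r : ℝ} (hf : ContinuousAt f r) (h : K < f r) :
    deriv (fun s => min (f s) K) r = 0 := by
  have hev : ∀ᶠ s in nhds r, K < f s := continuousAt_const.eventually_lt hf h
  have heq : (fun s => min (f s) K) =ᶠ[nhds r] (fun _ => K) := by
    filter_upwards [hev] with s hs
    exact min_eq_right hs.le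
  rw [heq.deriv_eq, deriv_const]

-- (3) at the level with vanishing derivative
lemma twi_deriv_min_of_eq {f : ℝ → ℝ} {K r : ℝ} (hf : HasDerivAt f 0 r) (h : f r = K) :
    deriv (fun s => min (f s) K) r = 0 := by
  have hs : HasDerivAt (fun s => min (f s) K) 0 r := by
    rw [hasDerivAt_iff_tendsto_slope] at hf ⊢
    have habs : Tendsto (fun s => |slope f r s|) (nhdsWithin r {r}ᶜ) (nhds 0) := by
      have := hf.abs
      simpa using this
    apply squeeze_zero_norm' _ habs
    filter_upwards [self_mem_nhdsWithin] with s hs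
    have h1 : min (f r) K = K := by rw [h, min_self]
    rw [slope_def_field, slope_def_field, h1]
    rw [Real.norm_eq_abs, abs_div, abs_div, h]
    have hnum : |min (f s) K - K| ≤ |f s - K| := by
      rcases le_total (f s) K with h2 | h2
      · rw [min_eq_left h2]
      · rw [min_eq_right h2, sub_self, abs_zero]; exact abs_nonneg _
    gcongr
  exact hs.deriv

-- countability of isolated sets
lemma twi_countable_isolated {S : Set ℝ}
    (h : ∀ x ∈ S, ∀ᶠ y in nhdsWithin x {x}ᶜ, y ∉ S) : S.Countable := by
  have hd : DiscreteTopology S := by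
    rw [discreteTopology_subtype_iff]
    intro x hx
    rw [inf_principal_eq_bot]
    exact h x hx
  exact (HereditarilyLindelof_LindelofSets S).countable hd

lemma twi_min_le_sin {r : ℝ} (hr : r ∈ Icc 0 π) : min r (π - r) ≤ π / 2 * Real.sin r := by
  obtain ⟨h0, h1⟩ := hr
  rcases le_total r (π/2) with h | h
  · have hj := Real.mul_le_sin h0 h
    have hpi := Real.pi_pos
    have h2 : π/2 * (2/π * r) ≤ π/2 * Real.sin r :=
      mul_le_mul_of_nonneg_left hj (by positivity)
    have h3 : π/2 * (2/π * r) = r := by field_simp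
    exact (min_le_left _ _).trans (by linarith)
  · have h0' : 0 ≤ π - r := by linarith
    have h1' : π - r ≤ π/2 := by linarith
    have hj := Real.mul_le_sin h0' h1'
    rw [Real.sin_pi_sub] at hj
    have hpi := Real.pi_pos
    have h2 : π/2 * (2/π * (π - r)) ≤ π/2 * Real.sin r :=
      mul_le_mul_of_nonneg_left hj (by positivity)
    have h3 : π/2 * (2/π * (π - r)) = π - r := by field_simp
    exact (min_le_right _ _).trans (by linarith)

noncomputable def twiRect : Set (ℝ × ℝ) := Icc 0 π ×ˢ Icc 0 (2*π)

lemma twi_pole_bound {G : ℝ × ℝ → ℝ} (hG : ContDiff ℝ (⊤ : ℕ∞) G)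
    (h0 : ∀ θ, G (0, θ) = 0) (hπ : ∀ θ, G (π, θ) = 0) :
    ∃ C : ℝ, 0 ≤ C ∧ ∀ p : ℝ × ℝ, p.1 ∈ Icc 0 π → p.2 ∈ Icc 0 (2*π) →
      |G p| ≤ C * Real.sin p.1 := by
  have hcomp : IsCompact twiRect := (isCompact_Icc).prod (isCompact_Icc)
  have hcont : ContinuousOn (twiPdr G) twiRect :=
    (twi_contDiff_pdr hG).continuous.continuousOn
  obtain ⟨M, hM⟩ := hcomp.exists_bound_of_continuousOn hcont
  set M' := max M 0 with hM'
  have hM'0 : 0 ≤ M' := le_max_right _ _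
  refine ⟨M' * (π/2), by positivity, ?_⟩
  rintro ⟨r, θ⟩ hr hθ
  have hbd : ∀ x ∈ Icc (0:ℝ) π, ‖twiPdr G (x, θ)‖ ≤ M' := fun x hx =>
    (hM (x, θ) ⟨hx, hθ⟩).trans (le_max_left _ _)
  have hder : ∀ x ∈ Icc (0:ℝ) π, HasDerivWithinAt (fun s => G (s, θ)) (twiPdr G (x, θ)) (Icc 0 π) x :=
    fun x _ => (twi_hasDerivAt_pdr hG x θ).hasDerivWithinAt
  have hmvt0 : ‖G (r, θ) - G (0, θ)‖ ≤ M' * ‖r - 0‖ :=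
    (convex_Icc (0:ℝ) π).norm_image_sub_le_of_norm_hasDerivWithin_le hder hbd
      (left_mem_Icc.2 Real.pi_pos.le) hr
  have hmvtπ : ‖G (r, θ) - G (π, θ)‖ ≤ M' * ‖r - π‖ :=
    (convex_Icc (0:ℝ) π).norm_image_sub_le_of_norm_hasDerivWithin_le hder hbd
      (right_mem_Icc.2 Real.pi_pos.le) hr
  rw [h0, sub_zero] at hmvt0
  rw [hπ, sub_zero] at hmvtπ
  obtain ⟨hr0, hr1⟩ := hr
  have hmin := twi_min_le_sin ⟨hr0, hr1⟩
  rw [Real.norm_eq_abs, Real.norm_eq_abs, abs_of_nonneg (by linarith : (0:ℝ) ≤ r - 0)] at hmvt0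
  rw [Real.norm_eq_abs, Real.norm_eq_abs, abs_of_nonpos (by linarith : r - π ≤ 0)] at hmvtπ
  have key : |G (r, θ)| ≤ M' * min r (π - r) := by
    rcases min_cases r (π - r) with ⟨hmeq, _⟩ | ⟨hmeq, _⟩
    · rw [hmeq]; simpa using hmvt0
    · rw [hmeq]; simpa using hmvtπ
  calc |G (r, θ)| ≤ M' * min r (π - r) := key
    _ ≤ M' * (π/2 * Real.sin r) := by
        exact mul_le_mul_of_nonneg_left hmin hM'0
    _ = M' * (π/2) * Real.sin r := by ring

noncomputable def twiFu (F : ℝ → ℝ → ℝ) : ℝ × ℝ → ℝ := Function.uncurry F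
noncomputable def twiFr (F : ℝ → ℝ → ℝ) : ℝ × ℝ → ℝ := twiPdr (twiFu F)
noncomputable def twiFt (F : ℝ → ℝ → ℝ) : ℝ × ℝ → ℝ := twiPdt (twiFu F)
noncomputable def twiFrr (F : ℝ → ℝ → ℝ) : ℝ × ℝ → ℝ := twiPdr (twiFr F)
noncomputable def twiFtt (F : ℝ → ℝ → ℝ) : ℝ × ℝ → ℝ := twiPdt (twiFt F)

noncomputable def twiSet : Set (ℝ × ℝ) := Ioo 0 π ×ˢ Ioc 0 (2*π)
noncomputable def twiNu : MeasureTheory.Measure (ℝ × ℝ) :=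
  (volume.restrict (Ioo 0 π)).prod (volume.restrict (Ioc 0 (2*π)))

variable {F u : ℝ → ℝ → ℝ} {K ε : ℝ}

section derivs
variable (hF : ContDiff ℝ (⊤ : ℕ∞) (twiFu F))

lemma twiFr_hasDerivAt (hF : ContDiff ℝ (⊤ : ℕ∞) (twiFu F)) (p : ℝ × ℝ) :
    HasDerivAt (fun s => F s p.2) (twiFr F p) p.1 :=
  twi_hasDerivAt_pdr hF p.1 p.2

lemma twiFt_hasDerivAt (hF : ContDiff ℝ (⊤ : ℕ∞) (twiFu F)) (p : ℝ × ℝ) :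
    HasDerivAt (F p.1) (twiFt F p) p.2 :=
  twi_hasDerivAt_pdt hF p.1 p.2

lemma twiFrr_hasDerivAt (hF : ContDiff ℝ (⊤ : ℕ∞) (twiFu F)) (p : ℝ × ℝ) :
    HasDerivAt (fun s => twiFr F (s, p.2)) (twiFrr F p) p.1 :=
  twi_hasDerivAt_pdr (twi_contDiff_pdr hF) p.1 p.2

lemma twiFtt_hasDerivAt (hF : ContDiff ℝ (⊤ : ℕ∞) (twiFu F)) (p : ℝ × ℝ) :
    HasDerivAt (fun t => twiFt F (p.1, t)) (twiFtt F p) p.2 :=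
  twi_hasDerivAt_pdt (twi_contDiff_pdt hF) p.1 p.2

lemma twiFu_cont (hF : ContDiff ℝ (⊤ : ℕ∞) (twiFu F)) : Continuous (twiFu F) := hF.continuous
lemma twiFr_cont (hF : ContDiff ℝ (⊤ : ℕ∞) (twiFu F)) : Continuous (twiFr F) :=
  (twi_contDiff_pdr hF).continuous
lemma twiFt_cont (hF : ContDiff ℝ (⊤ : ℕ∞) (twiFu F)) : Continuous (twiFt F) :=
  (twi_contDiff_pdt hF).continuous
lemma twiFrr_cont (hF : ContDiff ℝ (⊤ : ℕ∞) (twiFu F)) : Continuous (twiFrr F) :=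
  (twi_contDiff_pdr (twi_contDiff_pdr hF)).continuous
lemma twiFtt_cont (hF : ContDiff ℝ (⊤ : ℕ∞) (twiFu F)) : Continuous (twiFtt F) :=
  (twi_contDiff_pdt (twi_contDiff_pdt hF)).continuous

-- θ-periodicity of θ-derivative
lemma twiFt_periodic (hF : ContDiff ℝ (⊤ : ℕ∞) (twiFu F))
    (hper : ∀ r, Function.Periodic (F r) (2*π)) (r θ : ℝ) :
    twiFt F (r, θ + 2*π) = twiFt F (r, θ) := by
  have h1 : HasDerivAt (F r) (twiFt F (r, θ + 2*π)) (θ + 2*π) :=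
    twiFt_hasDerivAt hF (r, θ + 2*π)
  have h2 : HasDerivAt (fun t => F r (t + 2*π)) (twiFt F (r, θ + 2*π) * 1) θ :=
    h1.comp θ ((hasDerivAt_id θ).add_const (2*π))
  have h3 : (fun t => F r (t + 2*π)) = F r := funext fun t => hper r t
  rw [h3, mul_one] at h2
  exact h2.unique (twiFt_hasDerivAt hF (r, θ))

-- vanishing of θ-derivatives at poles
lemma twiFt_pole (hF : ContDiff ℝ (⊤ : ℕ∞) (twiFu F)) {a : ℝ} (hpole : ∀ θ₁ θ₂, F a θ₁ = F a θ₂)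
    (θ : ℝ) : twiFt F (a, θ) = 0 := by
  have h1 : F a = fun _ => F a 0 := funext fun t => hpole t 0
  have h2 : HasDerivAt (F a) 0 θ := by rw [h1]; exact hasDerivAt_const θ _
  exact (twiFt_hasDerivAt hF (a, θ)).unique h2

lemma twiFtt_pole (hF : ContDiff ℝ (⊤ : ℕ∞) (twiFu F)) {a : ℝ} (hpole : ∀ θ₁ θ₂, F a θ₁ = F a θ₂)
    (θ : ℝ) : twiFtt F (a, θ) = 0 := by
  have h1 : (fun t => twiFt F (a, t)) = fun _ => (0:ℝ) :=
    funext fun t => twiFt_pole hF hpole t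
  have h2 : HasDerivAt (fun t => twiFt F (a, t)) 0 θ := by rw [h1]; exact hasDerivAt_const θ _
  exact (twiFtt_hasDerivAt hF (a, θ)).unique h2

end derivs

-- measure facts
lemma twiNu_eq : twiNu = volume.restrict twiSet := by
  rw [twiNu, twiSet, Measure.prod_restrict, ← Measure.volume_eq_prod]

instance : IsFiniteMeasure twiNu := by
  rw [twiNu_eq]
  refine ⟨?_⟩
  rw [Measure.restrict_apply_univ]
  refine lt_of_le_of_lt (measure_mono (Set.prod_mono Set.Ioo_subset_Icc_self Set.Ioc_subset_Icc_self)) ?_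
  rw [Measure.volume_eq_prod, Measure.prod_prod]
  exact ENNReal.mul_lt_top (by simp) (by simp; exact ENNReal.mul_lt_top (by simp) (by simp))

lemma twi_ae_mem : ∀ᵐ p ∂twiNu, p ∈ twiSet := by
  rw [twiNu_eq]
  exact ae_restrict_mem ((measurableSet_Ioo).prod (measurableSet_Ioc))

lemma twi_integrable_of_bounded {H : ℝ × ℝ → ℝ} (hm : AEStronglyMeasurable H twiNu)
    {C : ℝ} (hb : ∀ p ∈ twiSet, |H p| ≤ C) : Integrable H twiNu := by
  refine (integrable_const C).mono' hm ?_
  filter_upwards [twi_ae_mem] with p hp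
  simpa [Real.norm_eq_abs] using hb p hp

variable {F u : ℝ → ℝ → ℝ} {K ε : ℝ}

lemma twiQ_cont (hε : 0 < ε) : Continuous (twiQ K ε) :=
  Real.continuous_sqrt.comp (((continuous_id.sub continuous_const).pow 2).add continuous_const)

lemma twiPhi_cont (hε : 0 < ε) : Continuous (twiPhi K ε) :=
  (((continuous_id.add continuous_const).sub (twiQ_cont hε)).div_const 2)

lemma twiPhi'_cont (hε : 0 < ε) : Continuous (twiPhi' K ε) := by
  refine (continuous_const.sub ?_).div_const 2
  exact (continuous_id.sub continuous_const).div (twiQ_cont hε) fun t => (twiQ_pos hε).ne'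

lemma twiPhi''_cont (hε : 0 < ε) : Continuous (twiPhi'' K ε) := by
  refine (Continuous.div continuous_const ?_ ?_).neg
  · exact (continuous_const.mul ((twiQ_cont hε).pow 3))
  · intro t
    have := twiQ_pos (K := K) (t := t) hε
    positivity

noncomputable def twiV (F : ℝ → ℝ → ℝ) (K ε : ℝ) : ℝ × ℝ → ℝ :=
  fun p => twiPhi K ε (twiFu F p)
noncomputable def twiVr (F : ℝ → ℝ → ℝ) (K ε : ℝ) : ℝ × ℝ → ℝ :=
  fun p => twiPhi' K ε (twiFu F p) * twiFr F p
noncomputable def twiVt (F : ℝ → ℝ → ℝ) (K ε : ℝ) : ℝ × ℝ → ℝ :=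
  fun p => twiPhi' K ε (twiFu F p) * twiFt F p
noncomputable def twiVrr (F : ℝ → ℝ → ℝ) (K ε : ℝ) : ℝ × ℝ → ℝ :=
  fun p => twiPhi'' K ε (twiFu F p) * twiFr F p * twiFr F p + twiPhi' K ε (twiFu F p) * twiFrr F p
noncomputable def twiVtt (F : ℝ → ℝ → ℝ) (K ε : ℝ) : ℝ × ℝ → ℝ :=
  fun p => twiPhi'' K ε (twiFu F p) * twiFt F p * twiFt F p + twiPhi' K ε (twiFu F p) * twiFtt F p

section vcalc
variable (hF : ContDiff ℝ (⊤ : ℕ∞) (twiFu F)) (hε : 0 < ε)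
include hF hε

lemma twiV_hasDerivAt_r (p : ℝ × ℝ) :
    HasDerivAt (fun s => twiV F K ε (s, p.2)) (twiVr F K ε p) p.1 :=
  (twiPhi_hasDerivAt hε).comp p.1 (twiFr_hasDerivAt hF p)

lemma twiV_hasDerivAt_t (p : ℝ × ℝ) :
    HasDerivAt (fun t => twiV F K ε (p.1, t)) (twiVt F K ε p) p.2 :=
  (twiPhi_hasDerivAt hε).comp p.2 (twiFt_hasDerivAt hF p)

lemma twiVr_hasDerivAt_r (p : ℝ × ℝ) :
    HasDerivAt (fun s => twiVr F K ε (s, p.2)) (twiVrr F K ε p) p.1 := by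
  have h1 : HasDerivAt (fun s => twiPhi' K ε (twiFu F (s, p.2)))
      (twiPhi'' K ε (twiFu F p) * twiFr F p) p.1 :=
    (twiPhi'_hasDerivAt hε).comp p.1 (twiFr_hasDerivAt hF p)
  have h2 := h1.mul (twiFrr_hasDerivAt hF p)
  exact h2

lemma twiVt_hasDerivAt_t (p : ℝ × ℝ) :
    HasDerivAt (fun t => twiVt F K ε (p.1, t)) (twiVtt F K ε p) p.2 := by
  have h1 : HasDerivAt (fun t => twiPhi' K ε (twiFu F (p.1, t)))
      (twiPhi'' K ε (twiFu F p) * twiFt F p) p.2 :=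
    (twiPhi'_hasDerivAt hε).comp p.2 (twiFt_hasDerivAt hF p)
  have h2 := h1.mul (twiFtt_hasDerivAt hF p)
  exact h2

lemma twiV_cont : Continuous (twiV F K ε) := (twiPhi_cont hε).comp (twiFu_cont hF)
lemma twiVr_cont : Continuous (twiVr F K ε) :=
  ((twiPhi'_cont hε).comp (twiFu_cont hF)).mul (twiFr_cont hF)
lemma twiVt_cont : Continuous (twiVt F K ε) :=
  ((twiPhi'_cont hε).comp (twiFu_cont hF)).mul (twiFt_cont hF)
lemma twiVrr_cont : Continuous (twiVrr F K ε) :=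
  ((((twiPhi''_cont hε).comp (twiFu_cont hF)).mul (twiFr_cont hF)).mul (twiFr_cont hF)).add
    (((twiPhi'_cont hε).comp (twiFu_cont hF)).mul (twiFrr_cont hF))
lemma twiVtt_cont : Continuous (twiVtt F K ε) :=
  ((((twiPhi''_cont hε).comp (twiFu_cont hF)).mul (twiFt_cont hF)).mul (twiFt_cont hF)).add
    (((twiPhi'_cont hε).comp (twiFu_cont hF)).mul (twiFtt_cont hF))

end vcalc

variable {F u : ℝ → ℝ → ℝ} {K ε : ℝ}

lemma twiNu_def : twiNu = (volume.restrict (Ioo 0 π)).prod (volume.restrict (Ioc 0 (2*π))) := rfl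

lemma twi_integrable_of_continuous {H : ℝ × ℝ → ℝ} (h : Continuous H) :
    Integrable H twiNu := by
  obtain ⟨C, hC⟩ := ((isCompact_Icc (a := (0:ℝ)) (b := π)).prod
    (isCompact_Icc (a := (0:ℝ)) (b := 2*π))).exists_bound_of_continuousOn h.continuousOn
  refine twi_integrable_of_bounded h.aestronglyMeasurable (C := C) ?_
  intro p hp
  have hp' := mem_prod.1 hp
  have : p ∈ Icc (0:ℝ) π ×ˢ Icc (0:ℝ) (2*π) :=
    mem_prod.2 ⟨Ioo_subset_Icc_self hp'.1, Ioc_subset_Icc_self hp'.2⟩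
  simpa [Real.norm_eq_abs] using hC p this

noncomputable def twiIn (F u : ℝ → ℝ → ℝ) (K ε : ℝ) : ℝ × ℝ → ℝ := fun p =>
  (twiFr u p * twiVr F K ε p + 1 / Real.sin p.1 ^ 2 * twiFt u p * twiVt F K ε p) * Real.sin p.1
noncomputable def twiLn (F u : ℝ → ℝ → ℝ) (K ε : ℝ) : ℝ × ℝ → ℝ := fun p =>
  twiFu u p * (twiVrr F K ε p * Real.sin p.1 + twiVr F K ε p * Real.cos p.1
    + twiVtt F K ε p / Real.sin p.1)
noncomputable def twiAn (F u : ℝ → ℝ → ℝ) (K ε : ℝ) : ℝ × ℝ → ℝ := fun p =>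
  twiFr u p * twiVr F K ε p * Real.sin p.1 + twiFu u p * twiVrr F K ε p * Real.sin p.1
    + twiFu u p * twiVr F K ε p * Real.cos p.1
noncomputable def twiBn (F u : ℝ → ℝ → ℝ) (K ε : ℝ) : ℝ × ℝ → ℝ := fun p =>
  twiFt u p * twiVt F K ε p + twiFu u p * twiVtt F K ε p
noncomputable def twiW (F u : ℝ → ℝ → ℝ) (K ε : ℝ) : ℝ × ℝ → ℝ := fun p =>
  twiFu u p * twiVr F K ε p * Real.sin p.1
noncomputable def twiZ (F u : ℝ → ℝ → ℝ) (K ε : ℝ) : ℝ × ℝ → ℝ := fun p =>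
  twiFu u p * twiVt F K ε p

section green
variable (hF : ContDiff ℝ (⊤ : ℕ∞) (twiFu F)) (hu : ContDiff ℝ (⊤ : ℕ∞) (twiFu u)) (hε : 0 < ε)
include hF hu hε

lemma twiW_hasDerivAt (p : ℝ × ℝ) :
    HasDerivAt (fun s => twiW F u K ε (s, p.2)) (twiAn F u K ε p) p.1 := by
  have h := ((twiFr_hasDerivAt hu p).mul (twiVr_hasDerivAt_r (K := K) hF hε p)).mul
    (Real.hasDerivAt_sin p.1)
  refine h.congr_deriv (Eq.symm ?_)
  simp only [twiAn, twiW, twiFu, Function.uncurry, Pi.mul_apply]; ring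

lemma twiZ_hasDerivAt (p : ℝ × ℝ) :
    HasDerivAt (fun t => twiZ F u K ε (p.1, t)) (twiBn F u K ε p) p.2 := by
  exact (twiFt_hasDerivAt hu p).mul (twiVt_hasDerivAt_t (K := K) hF hε p)

lemma twiAn_cont : Continuous (twiAn F u K ε) := by
  refine (((twiFr_cont hu).mul (twiVr_cont hF hε)).mul (Real.continuous_sin.comp continuous_fst)).add
    (((twiFu_cont hu).mul (twiVrr_cont hF hε)).mul (Real.continuous_sin.comp continuous_fst)) |>.add
    (((twiFu_cont hu).mul (twiVr_cont hF hε)).mul (Real.continuous_cos.comp continuous_fst))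

lemma twiBn_cont : Continuous (twiBn F u K ε) :=
  ((twiFt_cont hu).mul (twiVt_cont hF hε)).add ((twiFu_cont hu).mul (twiVtt_cont hF hε))

lemma twi_green
    (hperF : ∀ r, Function.Periodic (F r) (2*π)) (hperu : ∀ r, Function.Periodic (u r) (2*π))
    (hIn : Integrable (twiIn F u K ε) twiNu) (hLn : Integrable (twiLn F u K ε) twiNu)
    (hBn : Integrable (fun p => twiBn F u K ε p / Real.sin p.1) twiNu) :
    (∫ p, twiIn F u K ε p ∂twiNu) + (∫ p, twiLn F u K ε p ∂twiNu) = 0 := by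
  have hsum : ∀ p : ℝ × ℝ, twiIn F u K ε p + twiLn F u K ε p
      = twiAn F u K ε p + twiBn F u K ε p / Real.sin p.1 := by
    intro p
    by_cases hs : Real.sin p.1 = 0
    · simp only [twiIn, twiLn, twiAn, twiBn, hs, div_zero, mul_zero, zero_mul, add_zero,
        zero_add, mul_add]
      ring
    · simp only [twiIn, twiLn, twiAn, twiBn]
      field_simp [twiIn, twiLn, twiAn, twiBn]
      ring
  have hAn_int : Integrable (twiAn F u K ε) twiNu := twi_integrable_of_continuous (twiAn_cont hF hu hε)
  -- r-direction FTC
  have innerA : ∀ θ : ℝ, (∫ r in Ioo (0:ℝ) π, twiAn F u K ε (r, θ)) = 0 := by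
    intro θ
    have hftc : ∫ r in (0:ℝ)..π, twiAn F u K ε (r, θ)
        = twiW F u K ε (π, θ) - twiW F u K ε (0, θ) := by
      refine integral_eq_sub_of_hasDerivAt (f := fun s => twiW F u K ε (s, θ))
        (fun x _ => ?_) ?_
      · exact twiW_hasDerivAt hF hu hε (x, θ)
      · exact ((twiAn_cont hF hu hε).comp (continuous_id.prodMk continuous_const)).intervalIntegrable 0 π
    rw [← integral_Ioc_eq_integral_Ioo, ← intervalIntegral.integral_of_le Real.pi_pos.le]
    rw [hftc]
    simp [twiW, Real.sin_pi]
  have hintA : (∫ p, twiAn F u K ε p ∂twiNu) = 0 := by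
    rw [twiNu_def, MeasureTheory.integral_prod_symm _ (by rw [← twiNu_def]; exact hAn_int)]
    simp only [innerA, MeasureTheory.integral_zero]
  -- θ-direction FTC
  have innerB : ∀ r : ℝ, (∫ θ in Ioc (0:ℝ) (2*π), twiBn F u K ε (r, θ) / Real.sin r) = 0 := by
    intro r
    by_cases hs : Real.sin r = 0
    · simp [hs, div_zero]
    · have hftc : ∫ θ in (0:ℝ)..(2*π), twiBn F u K ε (r, θ)
          = twiZ F u K ε (r, 2*π) - twiZ F u K ε (r, 0) := by
        refine integral_eq_sub_of_hasDerivAt (f := fun t => twiZ F u K ε (r, t))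
          (fun x _ => ?_) ?_
        · exact twiZ_hasDerivAt hF hu hε (r, x)
        · exact ((twiBn_cont hF hu hε).comp (continuous_const.prodMk continuous_id)).intervalIntegrable 0 (2*π)
      have hz : twiZ F u K ε (r, 2*π) = twiZ F u K ε (r, 0) := by
        have h1 : u r (2*π) = u r 0 := by simpa using hperu r 0
        have h2 : F r (2*π) = F r 0 := by simpa using hperF r 0
        have h3 : twiFt F (r, 2*π) = twiFt F (r, 0) := by
          have := twiFt_periodic hF hperF r 0
          simpa using this
        simp only [twiZ, twiVt, twiFu, Function.uncurry]
        rw [h1, h2, h3]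
      have : (∫ θ in Ioc (0:ℝ) (2*π), twiBn F u K ε (r, θ)) = 0 := by
        rw [← intervalIntegral.integral_of_le (by positivity : (0:ℝ) ≤ 2*π), hftc, hz, sub_self]
      rw [MeasureTheory.integral_div, this, zero_div]
  have hBn_int' : Integrable (fun p : ℝ × ℝ => twiBn F u K ε p / Real.sin p.1) twiNu := hBn
  have hintB : (∫ p, twiBn F u K ε p / Real.sin p.1 ∂twiNu) = 0 := by
    rw [twiNu_def, MeasureTheory.integral_prod _ (by rw [← twiNu_def]; exact hBn_int')]
    simp only [innerB, MeasureTheory.integral_zero]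
  rw [← integral_add hIn hLn]
  calc (∫ p, (twiIn F u K ε p + twiLn F u K ε p) ∂twiNu)
      = ∫ p, (twiAn F u K ε p + twiBn F u K ε p / Real.sin p.1) ∂twiNu := by
        exact integral_congr_ae (Filter.Eventually.of_forall hsum)
    _ = (∫ p, twiAn F u K ε p ∂twiNu) + ∫ p, twiBn F u K ε p / Real.sin p.1 ∂twiNu :=
        integral_add hAn_int hBn
    _ = 0 := by rw [hintA, hintB, add_zero]

end green

variable {F u : ℝ → ℝ → ℝ} {K ε : ℝ}

lemma twiPhi'_abs_le (hε : 0 < ε) {t : ℝ} : |twiPhi' K ε t| ≤ 1 :=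
  abs_le.2 ⟨by linarith [twiPhi'_nonneg (K := K) (t := t) hε], twiPhi'_le_one hε⟩

lemma twiPhi''_abs_le (hε : 0 < ε) {t : ℝ} : |twiPhi'' K ε t| ≤ 1/(2*ε) := by
  have hq := twiQ_pos (K := K) (t := t) hε
  have hqe := twiQ_ge_eps (K := K) (t := t) hε
  rw [twiPhi'', abs_neg, abs_of_nonneg (by positivity)]
  rw [div_le_div_iff₀ (by positivity) (by positivity)]
  nlinarith [pow_le_pow_left₀ hε.le hqe 3]

lemma twi_sup_bound {H : ℝ × ℝ → ℝ} (h : Continuous H) :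
    ∃ M : ℝ, 0 ≤ M ∧ ∀ p ∈ twiSet, |H p| ≤ M := by
  obtain ⟨C, hC⟩ := ((isCompact_Icc (a := (0:ℝ)) (b := π)).prod
    (isCompact_Icc (a := (0:ℝ)) (b := 2*π))).exists_bound_of_continuousOn h.continuousOn
  refine ⟨max C 0, le_max_right _ _, fun p hp => ?_⟩
  have hp' := mem_prod.1 hp
  have hmem : p ∈ Icc (0:ℝ) π ×ˢ Icc (0:ℝ) (2*π) :=
    mem_prod.2 ⟨Ioo_subset_Icc_self hp'.1, Ioc_subset_Icc_self hp'.2⟩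
  exact le_trans (by simpa [Real.norm_eq_abs] using hC p hmem) (le_max_left _ _)

-- the pointwise Laplacian comparison
lemma twi_lap_ineq (hF : ContDiff ℝ (⊤ : ℕ∞) (twiFu F)) (hK : 0 < K) (hε : 0 < ε)
    (hlap : ∀ r ∈ Set.Ioo (0:ℝ) π, ∀ θ, sphLap F r θ ≤ F r θ)
    {p : ℝ × ℝ} (hp : p.1 ∈ Ioo (0:ℝ) π) :
    twiVrr F K ε p * Real.sin p.1 + twiVr F K ε p * Real.cos p.1
      + twiVtt F K ε p / Real.sin p.1
      ≤ (twiV F K ε p + ε/2) * Real.sin p.1 := by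
  have hs : 0 < Real.sin p.1 := Real.sin_pos_of_pos_of_lt_pi hp.1 hp.2
  have hlap' : twiFrr F p + Real.cos p.1 / Real.sin p.1 * twiFr F p
      + 1 / Real.sin p.1 ^ 2 * twiFtt F p ≤ twiFu F p := by
    have h := hlap p.1 hp p.2
    rw [sphLap] at h
    have e1 : (fun s => deriv (fun s' => F s' p.2) s) = fun s => twiFr F (s, p.2) :=
      funext fun s => (twiFr_hasDerivAt hF (s, p.2)).deriv
    have e3 : deriv (F p.1) = fun t => twiFt F (p.1, t) :=
      funext fun t => (twiFt_hasDerivAt hF (p.1, t)).deriv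
    rw [e1, e3, (twiFrr_hasDerivAt hF p).deriv, (twiFtt_hasDerivAt hF p).deriv,
      (twiFr_hasDerivAt hF p).deriv] at h
    exact h
  have ha0 : 0 ≤ twiPhi' K ε (twiFu F p) := twiPhi'_nonneg hε
  have hb : twiPhi'' K ε (twiFu F p) ≤ 0 := twiPhi''_nonpos hε
  have key : twiVrr F K ε p + Real.cos p.1 / Real.sin p.1 * twiVr F K ε p
      + 1 / Real.sin p.1 ^ 2 * twiVtt F K ε p ≤ twiV F K ε p + ε/2 := by
    have hexp : twiVrr F K ε p + Real.cos p.1 / Real.sin p.1 * twiVr F K ε p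
        + 1 / Real.sin p.1 ^ 2 * twiVtt F K ε p
        = twiPhi' K ε (twiFu F p) * (twiFrr F p + Real.cos p.1 / Real.sin p.1 * twiFr F p
            + 1 / Real.sin p.1 ^ 2 * twiFtt F p)
          + twiPhi'' K ε (twiFu F p) * (twiFr F p * twiFr F p
            + 1 / Real.sin p.1 ^ 2 * (twiFt F p * twiFt F p)) := by
      simp only [twiVrr, twiVr, twiVtt]; ring
    rw [hexp]
    have h1 : twiPhi' K ε (twiFu F p) * (twiFrr F p + Real.cos p.1 / Real.sin p.1 * twiFr F p
        + 1 / Real.sin p.1 ^ 2 * twiFtt F p) ≤ twiPhi' K ε (twiFu F p) * twiFu F p :=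
      mul_le_mul_of_nonneg_left hlap' ha0
    have h2 : twiPhi'' K ε (twiFu F p) * (twiFr F p * twiFr F p
        + 1 / Real.sin p.1 ^ 2 * (twiFt F p * twiFt F p)) ≤ 0 := by
      apply mul_nonpos_of_nonpos_of_nonneg hb
      have g1 := mul_self_nonneg (twiFr F p)
      have g2 := mul_self_nonneg (twiFt F p)
      have g3 : (0:ℝ) ≤ 1 / Real.sin p.1 ^ 2 := by positivity
      nlinarith
    have h3 : twiPhi' K ε (twiFu F p) * twiFu F p ≤ twiPhi K ε (twiFu F p) + ε/2 :=
      twiPhi'_mul_le hK hε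
    have : twiV F K ε p = twiPhi K ε (twiFu F p) := rfl
    linarith
  have hfe : twiVrr F K ε p * Real.sin p.1 + twiVr F K ε p * Real.cos p.1
      + twiVtt F K ε p / Real.sin p.1
      = (twiVrr F K ε p + Real.cos p.1 / Real.sin p.1 * twiVr F K ε p
        + 1 / Real.sin p.1 ^ 2 * twiVtt F K ε p) * Real.sin p.1 := by
    field_simp
  rw [hfe]
  exact mul_le_mul_of_nonneg_right key hs.le

-- null level sets
lemma twi_level_null_r (hF : ContDiff ℝ (⊤ : ℕ∞) (twiFu F)) (K : ℝ) :
    twiNu {p : ℝ × ℝ | twiFu F p = K ∧ twiFr F p ≠ 0} = 0 := by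
  set E := {p : ℝ × ℝ | twiFu F p = K ∧ twiFr F p ≠ 0} with hE
  have hEm : MeasurableSet E := by
    have h1 : MeasurableSet {p : ℝ × ℝ | twiFu F p = K} :=
      (twiFu_cont hF).measurable (measurableSet_singleton K)
    have h2 : MeasurableSet {p : ℝ × ℝ | twiFr F p ≠ 0} :=
      ((twiFr_cont hF).measurable (measurableSet_singleton 0)).compl
    exact h1.inter h2
  rw [twiNu_def, Measure.prod_apply_symm hEm]
  have hslice : ∀ θ : ℝ, (volume.restrict (Ioo (0:ℝ) π)) ((fun r => (r, θ)) ⁻¹' E) = 0 := by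
    intro θ
    have hcnt : Set.Countable ((fun r => (r, θ)) ⁻¹' E) := by
      apply twi_countable_isolated
      intro r0 hr0
      have hd : HasDerivAt (fun s => F s θ) (twiFr F (r0, θ)) r0 := twiFr_hasDerivAt hF (r0, θ)
      have hslope := hasDerivAt_iff_tendsto_slope.1 hd
      have hne := hslope.eventually_ne hr0.2
      filter_upwards [hne] with y hy hymem
      apply hy
      rw [slope_def_field]
      have h1 : F y θ = K := hymem.1
      have h2 : F r0 θ = K := hr0.1
      rw [h1, h2, sub_self, zero_div]
    refine le_antisymm ?_ zero_le
    calc (volume.restrict (Ioo (0:ℝ) π)) ((fun r => (r, θ)) ⁻¹' E)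
        ≤ volume ((fun r => (r, θ)) ⁻¹' E) := Measure.le_iff'.1 Measure.restrict_le_self _
      _ = 0 := hcnt.measure_zero volume
  simp only [hslice, lintegral_zero]

lemma twi_level_null_t (hF : ContDiff ℝ (⊤ : ℕ∞) (twiFu F)) (K : ℝ) :
    twiNu {p : ℝ × ℝ | twiFu F p = K ∧ twiFt F p ≠ 0} = 0 := by
  set E := {p : ℝ × ℝ | twiFu F p = K ∧ twiFt F p ≠ 0} with hE
  have hEm : MeasurableSet E := by
    have h1 : MeasurableSet {p : ℝ × ℝ | twiFu F p = K} :=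
      (twiFu_cont hF).measurable (measurableSet_singleton K)
    have h2 : MeasurableSet {p : ℝ × ℝ | twiFt F p ≠ 0} :=
      ((twiFt_cont hF).measurable (measurableSet_singleton 0)).compl
    exact h1.inter h2
  rw [twiNu_def, Measure.prod_apply hEm]
  have hslice : ∀ r : ℝ, (volume.restrict (Ioc (0:ℝ) (2*π))) (Prod.mk r ⁻¹' E) = 0 := by
    intro r
    have hcnt : Set.Countable (Prod.mk r ⁻¹' E) := by
      apply twi_countable_isolated
      intro t0 ht0
      have hd : HasDerivAt (F r) (twiFt F (r, t0)) t0 := twiFt_hasDerivAt hF (r, t0)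
      have hslope := hasDerivAt_iff_tendsto_slope.1 hd
      have hne := hslope.eventually_ne ht0.2
      filter_upwards [hne] with y hy hymem
      apply hy
      rw [slope_def_field]
      have h1 : F r y = K := hymem.1
      have h2 : F r t0 = K := ht0.1
      rw [h1, h2, sub_self, zero_div]
    refine le_antisymm ?_ zero_le
    calc (volume.restrict (Ioc (0:ℝ) (2*π))) (Prod.mk r ⁻¹' E)
        ≤ volume (Prod.mk r ⁻¹' E) := Measure.le_iff'.1 Measure.restrict_le_self _
      _ = 0 := hcnt.measure_zero volume
  simp only [hslice, lintegral_zero]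

-- convergence of the regularized derivatives to the (junk-valued) derivative of the truncation
lemma twi_claim_r (hF : ContDiff ℝ (⊤ : ℕ∞) (twiFu F)) {p : ℝ × ℝ}
    (hreg : ¬(twiFu F p = K ∧ twiFr F p ≠ 0)) :
    Tendsto (fun n : ℕ => twiVr F K (1/(n+1)) p) atTop
      (nhds (deriv (fun s => min (F s p.2) K) p.1)) := by
  rcases lt_trichotomy (twiFu F p) K with hlt | heq | hgt
  · rw [twi_deriv_min_of_lt (twiFr_hasDerivAt hF p) hlt]
    have h := (twiPhi'_tendsto (K := K) (ne_of_lt hlt)).mul_const (twiFr F p)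
    rw [if_pos hlt, one_mul] at h
    exact h
  · have hFr0 : twiFr F p = 0 := by
      by_contra h; exact hreg ⟨heq, h⟩
    have hd : HasDerivAt (fun s => F s p.2) 0 p.1 := by
      have := twiFr_hasDerivAt hF p; rwa [hFr0] at this
    rw [twi_deriv_min_of_eq hd heq]
    simp only [twiVr, hFr0, mul_zero]
    exact tendsto_const_nhds
  · rw [twi_deriv_min_of_gt (twiFr_hasDerivAt hF p).continuousAt hgt]
    have h := (twiPhi'_tendsto (K := K) (ne_of_gt hgt)).mul_const (twiFr F p)
    rw [if_neg (not_lt.2 hgt.le), zero_mul] at h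
    exact h

lemma twi_claim_t (hF : ContDiff ℝ (⊤ : ℕ∞) (twiFu F)) {p : ℝ × ℝ}
    (hreg : ¬(twiFu F p = K ∧ twiFt F p ≠ 0)) :
    Tendsto (fun n : ℕ => twiVt F K (1/(n+1)) p) atTop
      (nhds (deriv (fun t => min (F p.1 t) K) p.2)) := by
  rcases lt_trichotomy (twiFu F p) K with hlt | heq | hgt
  · rw [twi_deriv_min_of_lt (twiFt_hasDerivAt hF p) hlt]
    have h := (twiPhi'_tendsto (K := K) (ne_of_lt hlt)).mul_const (twiFt F p)
    rw [if_pos hlt, one_mul] at h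
    exact h
  · have hFt0 : twiFt F p = 0 := by
      by_contra h; exact hreg ⟨heq, h⟩
    have hd : HasDerivAt (F p.1) 0 p.2 := by
      have := twiFt_hasDerivAt hF p; rwa [hFt0] at this
    rw [twi_deriv_min_of_eq hd heq]
    simp only [twiVt, hFt0, mul_zero]
    exact tendsto_const_nhds
  · rw [twi_deriv_min_of_gt (twiFt_hasDerivAt hF p).continuousAt hgt]
    have h := (twiPhi'_tendsto (K := K) (ne_of_gt hgt)).mul_const (twiFt F p)
    rw [if_neg (not_lt.2 hgt.le), zero_mul] at h
    exact h

lemma twi_sphereIntegral_eq {G : ℝ → ℝ → ℝ}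
    (hint : Integrable (fun p : ℝ × ℝ => G p.1 p.2 * Real.sin p.1) twiNu) :
    sphereIntegral G = ∫ p, G p.1 p.2 * Real.sin p.1 ∂twiNu := by
  rw [twiNu_def, MeasureTheory.integral_prod _ (by rw [← twiNu_def]; exact hint)]
  rw [sphereIntegral, intervalIntegral.integral_of_le Real.pi_pos.le,
    integral_Ioc_eq_integral_Ioo]
  refine integral_congr_ae (Filter.Eventually.of_forall fun r => ?_)
  exact intervalIntegral.integral_of_le (by positivity)

/-- Let `f > 0` be smooth on `S²` with `Δf ≤ f`, and let `K > 0` be a regular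
value of `f`.  Then for every nonnegative test function `u` on `S²`,
`−∫_{S²} ⟨∇u, ∇(min(f,K))⟩ dvol ≤ ∫_{S²} u · min(f,K) dvol`, where on `S²`
`⟨∇u, ∇v⟩ = u_r v_r + (1/sin²r) u_θ v_θ`. -/
theorem truncation_weak_inequality (F : ℝ → ℝ → ℝ) (K : ℝ) (hK : 0 < K)
    (hsmooth : ContDiff ℝ (⊤ : ℕ∞) (Function.uncurry F))
    (hper : ∀ r, Function.Periodic (F r) (2*π))
    (hpole₀ : ∀ θ₁ θ₂, F 0 θ₁ = F 0 θ₂)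
    (hpoleπ : ∀ θ₁ θ₂, F π θ₁ = F π θ₂)
    (hpos : ∀ r θ, 0 < F r θ)
    (hlap : ∀ r ∈ Set.Ioo (0:ℝ) π, ∀ θ, sphLap F r θ ≤ F r θ)
    (hreg : ∀ r ∈ Set.Ioo (0:ℝ) π, ∀ θ, F r θ = K →
      (deriv (fun s => F s θ) r ≠ 0 ∨ deriv (F r) θ ≠ 0)) :
    ∀ u : ℝ → ℝ → ℝ, ContDiff ℝ (⊤ : ℕ∞) (Function.uncurry u) →
      (∀ r θ, 0 ≤ u r θ) → (∀ r, Function.Periodic (u r) (2*π)) →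
      (∀ θ₁ θ₂, u 0 θ₁ = u 0 θ₂) → (∀ θ₁ θ₂, u π θ₁ = u π θ₂) →
      - sphereIntegral (fun r θ =>
            deriv (fun s => u s θ) r * deriv (fun s => min (F s θ) K) r
            + (1 / Real.sin r ^ 2) * deriv (u r) θ * deriv (fun t => min (F r t) K) θ)
        ≤ sphereIntegral (fun r θ => u r θ * min (F r θ) K) := by
  intro u hu hupos huper hup0 hupπ
  have hF : ContDiff ℝ (⊤ : ℕ∞) (twiFu F) := hsmooth
  have hu' : ContDiff ℝ (⊤ : ℕ∞) (twiFu u) := hu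
  -- the sequence of regularization parameters
  set e : ℕ → ℝ := fun n => 1/((n:ℝ)+1) with he_def
  have he : ∀ n, 0 < e n := fun n => by positivity
  -- pole bounds
  obtain ⟨CUt, hCUt0, hCUt⟩ := twi_pole_bound (twi_contDiff_pdt hu')
    (fun θ => twiFt_pole hu' hup0 θ) (fun θ => twiFt_pole hu' hupπ θ)
  obtain ⟨CFt, hCFt0, hCFt⟩ := twi_pole_bound (twi_contDiff_pdt hF)
    (fun θ => twiFt_pole hF hpole₀ θ) (fun θ => twiFt_pole hF hpoleπ θ)
  obtain ⟨CFtt, hCFtt0, hCFtt⟩ := twi_pole_bound (twi_contDiff_pdt (twi_contDiff_pdt hF))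
    (fun θ => twiFtt_pole hF hpole₀ θ) (fun θ => twiFtt_pole hF hpoleπ θ)
  -- sup bounds
  obtain ⟨MUr, hMUr0, hMUr⟩ := twi_sup_bound (twiFr_cont hu')
  obtain ⟨MFr, hMFr0, hMFr⟩ := twi_sup_bound (twiFr_cont hF)
  obtain ⟨MFt, hMFt0, hMFt⟩ := twi_sup_bound (twiFt_cont hF)
  obtain ⟨MFrr, hMFrr0, hMFrr⟩ := twi_sup_bound (twiFrr_cont hF)
  obtain ⟨Mu, hMu0, hMu⟩ := twi_sup_bound (twiFu_cont hu')
  -- basic measurability helpers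
  have hsinm : Measurable (fun p : ℝ × ℝ => Real.sin p.1) :=
    (Real.continuous_sin.comp continuous_fst).measurable
  have hinv : Measurable (fun p : ℝ × ℝ => 1 / Real.sin p.1 ^ 2) :=
    measurable_const.div ((hsinm.pow_const 2))
  -- pointwise facts on twiSet
  have hsin_pos : ∀ p : ℝ × ℝ, p ∈ twiSet → 0 < Real.sin p.1 := by
    intro p hp
    have hp1 := (mem_prod.1 hp).1
    exact Real.sin_pos_of_pos_of_lt_pi hp1.1 hp1.2
  have hmemIcc : ∀ p : ℝ × ℝ, p ∈ twiSet → p.1 ∈ Icc 0 π ∧ p.2 ∈ Icc 0 (2*π) := by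
    intro p hp
    have hp' := mem_prod.1 hp
    exact ⟨Ioo_subset_Icc_self hp'.1, Ioc_subset_Icc_self hp'.2⟩
  -- derivative bounds (uniform in n)
  have hVr_bd : ∀ n, ∀ p ∈ twiSet, |twiVr F K (e n) p| ≤ MFr := by
    intro n p hp
    rw [twiVr, abs_mul]
    calc |twiPhi' K (e n) (twiFu F p)| * |twiFr F p| ≤ 1 * MFr := by
          apply mul_le_mul (twiPhi'_abs_le (he n)) (hMFr p hp) (abs_nonneg _) zero_le_one
      _ = MFr := one_mul _
  have hVt_bd : ∀ n, ∀ p ∈ twiSet, |twiVt F K (e n) p| ≤ MFt := by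
    intro n p hp
    rw [twiVt, abs_mul]
    calc |twiPhi' K (e n) (twiFu F p)| * |twiFt F p| ≤ 1 * MFt := by
          apply mul_le_mul (twiPhi'_abs_le (he n)) (hMFt p hp) (abs_nonneg _) zero_le_one
      _ = MFt := one_mul _
  have hVrr_bd : ∀ n, ∀ p ∈ twiSet, |twiVrr F K (e n) p| ≤ 1/(2*e n) * (MFr * MFr) + MFrr := by
    intro n p hp
    rw [twiVrr]
    refine (abs_add_le _ _).trans ?_
    gcongr
    · rw [abs_mul, abs_mul]
      have h1 := twiPhi''_abs_le (K := K) (t := twiFu F p) (he n)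
      have h2 := hMFr p hp
      calc |twiPhi'' K (e n) (twiFu F p)| * |twiFr F p| * |twiFr F p|
          ≤ (1/(2*e n)) * MFr * MFr := by
            apply mul_le_mul (mul_le_mul h1 h2 (abs_nonneg _) (by positivity)) h2 (abs_nonneg _)
            positivity
        _ = 1/(2*e n) * (MFr * MFr) := by ring
    · rw [abs_mul]
      calc |twiPhi' K (e n) (twiFu F p)| * |twiFrr F p| ≤ 1 * MFrr := by
            apply mul_le_mul (twiPhi'_abs_le (he n)) (hMFrr p hp) (abs_nonneg _) zero_le_one
        _ = MFrr := one_mul _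
  have hVtt_bd : ∀ n, ∀ p ∈ twiSet,
      |twiVtt F K (e n) p| ≤ (1/(2*e n) * (CFt * MFt) + CFtt) * Real.sin p.1 := by
    intro n p hp
    obtain ⟨hic1, hic2⟩ := hmemIcc p hp
    have hs0 : 0 ≤ Real.sin p.1 := (hsin_pos p hp).le
    rw [twiVtt]
    refine (abs_add_le _ _).trans ?_
    have t1 : |twiPhi'' K (e n) (twiFu F p) * twiFt F p * twiFt F p|
        ≤ 1/(2*e n) * (CFt * MFt) * Real.sin p.1 := by
      rw [abs_mul, abs_mul]
      have h1 := twiPhi''_abs_le (K := K) (t := twiFu F p) (he n)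
      have h2 := hCFt p hic1 hic2
      have h3 := hMFt p hp
      calc |twiPhi'' K (e n) (twiFu F p)| * |twiFt F p| * |twiFt F p|
          ≤ (1/(2*e n)) * (CFt * Real.sin p.1) * MFt := by
            apply mul_le_mul (mul_le_mul h1 h2 (abs_nonneg _) (by positivity)) h3 (abs_nonneg _)
            positivity
        _ = 1/(2*e n) * (CFt * MFt) * Real.sin p.1 := by ring
    have t2 : |twiPhi' K (e n) (twiFu F p) * twiFtt F p| ≤ CFtt * Real.sin p.1 := by
      rw [abs_mul]
      calc |twiPhi' K (e n) (twiFu F p)| * |twiFtt F p| ≤ 1 * (CFtt * Real.sin p.1) := by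
            apply mul_le_mul (twiPhi'_abs_le (he n)) (hCFtt p hic1 hic2) (abs_nonneg _) zero_le_one
        _ = CFtt * Real.sin p.1 := one_mul _
    calc |twiPhi'' K (e n) (twiFu F p) * twiFt F p * twiFt F p|
            + |twiPhi' K (e n) (twiFu F p) * twiFtt F p|
        ≤ 1/(2*e n) * (CFt * MFt) * Real.sin p.1 + CFtt * Real.sin p.1 := add_le_add t1 t2
      _ = (1/(2*e n) * (CFt * MFt) + CFtt) * Real.sin p.1 := by ring
  -- In bound (uniform)
  have hIn_bd : ∀ n, ∀ p ∈ twiSet, |twiIn F u K (e n) p| ≤ MUr * MFr + CUt * MFt := by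
    intro n p hp
    obtain ⟨hic1, hic2⟩ := hmemIcc p hp
    have hs := hsin_pos p hp
    have hsplit : twiIn F u K (e n) p = twiFr u p * twiVr F K (e n) p * Real.sin p.1
        + twiFt u p / Real.sin p.1 * twiVt F K (e n) p := by
      simp only [twiIn]
      field_simp
    rw [hsplit]
    refine (abs_add_le _ _).trans ?_
    have habs_sin : |Real.sin p.1| ≤ 1 := abs_le.2 ⟨Real.neg_one_le_sin _, Real.sin_le_one _⟩
    have t1 : |twiFr u p * twiVr F K (e n) p * Real.sin p.1| ≤ MUr * MFr := by
      rw [abs_mul, abs_mul]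
      calc |twiFr u p| * |twiVr F K (e n) p| * |Real.sin p.1| ≤ MUr * MFr * 1 := by
            apply mul_le_mul _ habs_sin (abs_nonneg _) (by positivity)
            exact mul_le_mul (hMUr p hp) (hVr_bd n p hp) (abs_nonneg _) hMUr0
        _ = MUr * MFr := mul_one _
    have t2 : |twiFt u p / Real.sin p.1 * twiVt F K (e n) p| ≤ CUt * MFt := by
      rw [abs_mul, abs_div, abs_of_pos hs]
      have hq : |twiFt u p| / Real.sin p.1 ≤ CUt := by
        rw [div_le_iff₀ hs]
        exact hCUt p hic1 hic2
      exact mul_le_mul hq (hVt_bd n p hp) (abs_nonneg _) hCUt0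
    exact add_le_add t1 t2
  -- integrability of all players
  have hIn_meas : ∀ n, AEStronglyMeasurable (twiIn F u K (e n)) twiNu := by
    intro n
    have : Measurable (twiIn F u K (e n)) := by
      unfold twiIn
      exact (((twiFr_cont hu').measurable.mul (twiVr_cont hF (he n)).measurable).add
        ((hinv.mul (twiFt_cont hu').measurable).mul (twiVt_cont hF (he n)).measurable)).mul hsinm
    exact this.aestronglyMeasurable
  have hIn_int : ∀ n, Integrable (twiIn F u K (e n)) twiNu := fun n =>
    twi_integrable_of_bounded (hIn_meas n) (hIn_bd n)
  have hLn_int : ∀ n, Integrable (twiLn F u K (e n)) twiNu := by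
    intro n
    have hmeas : AEStronglyMeasurable (twiLn F u K (e n)) twiNu := by
      have : Measurable (twiLn F u K (e n)) := by
        unfold twiLn
        exact (twiFu_cont hu').measurable.mul
          ((((twiVrr_cont hF (he n)).measurable.mul hsinm).add
            ((twiVr_cont hF (he n)).measurable.mul (Real.continuous_cos.comp continuous_fst).measurable)).add
            ((twiVtt_cont hF (he n)).measurable.div hsinm))
      exact this.aestronglyMeasurable
    refine twi_integrable_of_bounded hmeas
      (C := Mu * ((1/(2*e n) * (MFr * MFr) + MFrr) + MFr + (1/(2*e n) * (CFt * MFt) + CFtt))) ?_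
    intro p hp
    have hs := hsin_pos p hp
    have habs_sin : |Real.sin p.1| ≤ 1 := abs_le.2 ⟨Real.neg_one_le_sin _, Real.sin_le_one _⟩
    have habs_cos : |Real.cos p.1| ≤ 1 := abs_le.2 ⟨Real.neg_one_le_cos _, Real.cos_le_one _⟩
    rw [twiLn, abs_mul]
    refine mul_le_mul (hMu p hp) ?_ (abs_nonneg _) hMu0
    refine (abs_add_le _ _).trans ?_
    refine add_le_add ((abs_add_le _ _).trans (add_le_add ?_ ?_)) ?_
    · rw [abs_mul]
      calc |twiVrr F K (e n) p| * |Real.sin p.1| ≤ (1/(2*e n) * (MFr * MFr) + MFrr) * 1 := by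
            apply mul_le_mul (hVrr_bd n p hp) habs_sin (abs_nonneg _)
            have := hVrr_bd n p hp
            have := abs_nonneg (twiVrr F K (e n) p)
            linarith
        _ = 1/(2*e n) * (MFr * MFr) + MFrr := mul_one _
    · rw [abs_mul]
      calc |twiVr F K (e n) p| * |Real.cos p.1| ≤ MFr * 1 := by
            apply mul_le_mul (hVr_bd n p hp) habs_cos (abs_nonneg _)
            have := hVr_bd n p hp
            have := abs_nonneg (twiVr F K (e n) p)
            linarith
        _ = MFr := mul_one _
    · rw [abs_div, abs_of_pos hs, div_le_iff₀ hs]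
      exact hVtt_bd n p hp
  have hBn_int : ∀ n, Integrable (fun p => twiBn F u K (e n) p / Real.sin p.1) twiNu := by
    intro n
    have hmeas : AEStronglyMeasurable (fun p : ℝ × ℝ => twiBn F u K (e n) p / Real.sin p.1) twiNu := by
      have : Measurable (fun p : ℝ × ℝ => twiBn F u K (e n) p / Real.sin p.1) :=
        (twiBn_cont hF hu' (he n)).measurable.div hsinm
      exact this.aestronglyMeasurable
    refine twi_integrable_of_bounded hmeas
      (C := CUt * MFt + Mu * (1/(2*e n) * (CFt * MFt) + CFtt)) ?_
    intro p hp
    obtain ⟨hic1, hic2⟩ := hmemIcc p hp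
    have hs := hsin_pos p hp
    rw [twiBn]
    rw [abs_div, abs_of_pos hs, div_le_iff₀ hs]
    refine (abs_add_le _ _).trans ?_
    have t1 : |twiFt u p * twiVt F K (e n) p| ≤ CUt * MFt * Real.sin p.1 := by
      rw [abs_mul]
      calc |twiFt u p| * |twiVt F K (e n) p| ≤ (CUt * Real.sin p.1) * MFt :=
            mul_le_mul (hCUt p hic1 hic2) (hVt_bd n p hp) (abs_nonneg _) (by positivity)
        _ = CUt * MFt * Real.sin p.1 := by ring
    have t2 : |twiFu u p * twiVtt F K (e n) p|
        ≤ Mu * (1/(2*e n) * (CFt * MFt) + CFtt) * Real.sin p.1 := by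
      rw [abs_mul]
      calc |twiFu u p| * |twiVtt F K (e n) p|
          ≤ Mu * ((1/(2*e n) * (CFt * MFt) + CFtt) * Real.sin p.1) :=
            mul_le_mul (hMu p hp) (hVtt_bd n p hp) (abs_nonneg _) hMu0
        _ = Mu * (1/(2*e n) * (CFt * MFt) + CFtt) * Real.sin p.1 := by ring
    calc |twiFt u p * twiVt F K (e n) p| + |twiFu u p * twiVtt F K (e n) p|
        ≤ CUt * MFt * Real.sin p.1 + Mu * (1/(2*e n) * (CFt * MFt) + CFtt) * Real.sin p.1 :=
          add_le_add t1 t2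
      _ = (CUt * MFt + Mu * (1/(2*e n) * (CFt * MFt) + CFtt)) * Real.sin p.1 := by ring
  -- continuous integrands
  have hRn_int : ∀ n, Integrable
      (fun p : ℝ × ℝ => twiFu u p * (twiV F K (e n) p + e n / 2) * Real.sin p.1) twiNu := fun n =>
    twi_integrable_of_continuous (((twiFu_cont hu').mul
      ((twiV_cont hF (he n)).add continuous_const)).mul (Real.continuous_sin.comp continuous_fst))
  have hR_int : Integrable
      (fun p : ℝ × ℝ => u p.1 p.2 * min (F p.1 p.2) K * Real.sin p.1) twiNu :=
    twi_integrable_of_continuous (((twiFu_cont hu').mul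
      ((twiFu_cont hF).min continuous_const)).mul (Real.continuous_sin.comp continuous_fst))
  have husin_int : Integrable (fun p : ℝ × ℝ => twiFu u p * Real.sin p.1) twiNu :=
    twi_integrable_of_continuous ((twiFu_cont hu').mul (Real.continuous_sin.comp continuous_fst))
  set CU := ∫ p, twiFu u p * Real.sin p.1 ∂twiNu with hCU_def
  -- Green's identity
  have hgreen : ∀ n, (∫ p, twiIn F u K (e n) p ∂twiNu)
      = -(∫ p, twiLn F u K (e n) p ∂twiNu) := by
    intro n
    have := twi_green hF hu' (he n) hper huper (hIn_int n) (hLn_int n) (hBn_int n)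
    linarith
  -- Ln ≤ Rn
  have hLnRn : ∀ n, (∫ p, twiLn F u K (e n) p ∂twiNu)
      ≤ ∫ p, twiFu u p * (twiV F K (e n) p + e n / 2) * Real.sin p.1 ∂twiNu := by
    intro n
    refine integral_mono_ae (hLn_int n) (hRn_int n) ?_
    filter_upwards [twi_ae_mem] with p hp
    have hp1 := (mem_prod.1 hp).1
    have hlapineq := twi_lap_ineq (K := K) hF hK (he n) hlap hp1
    have hu0 : 0 ≤ twiFu u p := hupos p.1 p.2
    calc twiLn F u K (e n) p
        = twiFu u p * (twiVrr F K (e n) p * Real.sin p.1 + twiVr F K (e n) p * Real.cos p.1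
            + twiVtt F K (e n) p / Real.sin p.1) := rfl
      _ ≤ twiFu u p * ((twiV F K (e n) p + e n / 2) * Real.sin p.1) :=
          mul_le_mul_of_nonneg_left hlapineq hu0
      _ = twiFu u p * (twiV F K (e n) p + e n / 2) * Real.sin p.1 := (mul_assoc _ _ _).symm
  -- Rn ≤ R + (e n / 2) * CU
  have hRnR : ∀ n, (∫ p, twiFu u p * (twiV F K (e n) p + e n / 2) * Real.sin p.1 ∂twiNu)
      ≤ (∫ p, u p.1 p.2 * min (F p.1 p.2) K * Real.sin p.1 ∂twiNu) + e n / 2 * CU := by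
    intro n
    have hmono : (∫ p, twiFu u p * (twiV F K (e n) p + e n / 2) * Real.sin p.1 ∂twiNu)
        ≤ ∫ p, (u p.1 p.2 * min (F p.1 p.2) K * Real.sin p.1
            + e n / 2 * (twiFu u p * Real.sin p.1)) ∂twiNu := by
      refine integral_mono_ae (hRn_int n) (hR_int.add (husin_int.const_mul (e n / 2))) ?_
      filter_upwards [twi_ae_mem] with p hp
      have hp1 := (mem_prod.1 hp).1
      have hs0 : 0 ≤ Real.sin p.1 := (hsin_pos p hp).le
      have hu0 : 0 ≤ twiFu u p := hupos p.1 p.2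
      have hV : twiPhi K (e n) (twiFu F p) ≤ min (twiFu F p) K := twiPhi_le_min (he n)
      have hkey := mul_nonpos_of_nonneg_of_nonpos (mul_nonneg hu0 hs0) (sub_nonpos.2 hV)
      have hexp : twiFu u p * (twiV F K (e n) p + e n / 2) * Real.sin p.1
          - (u p.1 p.2 * min (F p.1 p.2) K * Real.sin p.1
            + e n / 2 * (twiFu u p * Real.sin p.1))
          = twiFu u p * Real.sin p.1 * (twiPhi K (e n) (twiFu F p) - min (twiFu F p) K) := by
        simp only [twiV, twiFu, Function.uncurry]
        ring
      linarith [hexp ▸ hkey]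
    calc (∫ p, twiFu u p * (twiV F K (e n) p + e n / 2) * Real.sin p.1 ∂twiNu)
        ≤ ∫ p, (u p.1 p.2 * min (F p.1 p.2) K * Real.sin p.1
            + e n / 2 * (twiFu u p * Real.sin p.1)) ∂twiNu := hmono
      _ = (∫ p, u p.1 p.2 * min (F p.1 p.2) K * Real.sin p.1 ∂twiNu)
          + ∫ p, e n / 2 * (twiFu u p * Real.sin p.1) ∂twiNu :=
          integral_add hR_int (husin_int.const_mul (e n / 2))
      _ = (∫ p, u p.1 p.2 * min (F p.1 p.2) K * Real.sin p.1 ∂twiNu) + e n / 2 * CU := by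
          rw [MeasureTheory.integral_const_mul]
  -- the limit integrand
  set Tfun := fun p : ℝ × ℝ =>
    (deriv (fun s => u s p.2) p.1 * deriv (fun s => min (F s p.2) K) p.1
      + 1 / Real.sin p.1 ^ 2 * deriv (u p.1) p.2 * deriv (fun t => min (F p.1 t) K) p.2)
      * Real.sin p.1 with hT_def
  set glim := fun p : ℝ × ℝ =>
    (twiFr u p * (if twiFu F p < K then twiFr F p else 0)
      + 1 / Real.sin p.1 ^ 2 * twiFt u p * (if twiFu F p < K then twiFt F p else 0))
      * Real.sin p.1 with hg_def
  have haer : ∀ᵐ p ∂twiNu, ¬(twiFu F p = K ∧ twiFr F p ≠ 0) := by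
    have h := twi_level_null_r hF K
    rw [ae_iff]
    simpa [not_not] using h
  have haet : ∀ᵐ p ∂twiNu, ¬(twiFu F p = K ∧ twiFt F p ≠ 0) := by
    have h := twi_level_null_t hF K
    rw [ae_iff]
    simpa [not_not] using h
  -- glim is integrable
  have hDr_meas : Measurable (fun p : ℝ × ℝ => if twiFu F p < K then twiFr F p else 0) :=
    Measurable.ite (measurableSet_lt (twiFu_cont hF).measurable measurable_const)
      (twiFr_cont hF).measurable measurable_const
  have hDt_meas : Measurable (fun p : ℝ × ℝ => if twiFu F p < K then twiFt F p else 0) :=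
    Measurable.ite (measurableSet_lt (twiFu_cont hF).measurable measurable_const)
      (twiFt_cont hF).measurable measurable_const
  have hDr_bd : ∀ p ∈ twiSet, |(if twiFu F p < K then twiFr F p else 0)| ≤ MFr := by
    intro p hp
    split_ifs
    · exact hMFr p hp
    · simpa using hMFr0
  have hDt_bd : ∀ p ∈ twiSet, |(if twiFu F p < K then twiFt F p else 0)| ≤ MFt := by
    intro p hp
    split_ifs
    · exact hMFt p hp
    · simpa using hMFt0
  have hglim_int : Integrable glim twiNu := by
    refine twi_integrable_of_bounded ?_ (C := MUr * MFr + CUt * MFt) ?_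
    · refine Measurable.aestronglyMeasurable ?_
      rw [hg_def]
      exact (((twiFr_cont hu').measurable.mul hDr_meas).add
        ((hinv.mul (twiFt_cont hu').measurable).mul hDt_meas)).mul hsinm
    · intro p hp
      obtain ⟨hic1, hic2⟩ := hmemIcc p hp
      have hs := hsin_pos p hp
      have hsplit : glim p = twiFr u p * (if twiFu F p < K then twiFr F p else 0) * Real.sin p.1
          + twiFt u p / Real.sin p.1 * (if twiFu F p < K then twiFt F p else 0) := by
        rw [hg_def]
        field_simp
      rw [hsplit]
      refine (abs_add_le _ _).trans ?_
      have habs_sin : |Real.sin p.1| ≤ 1 := abs_le.2 ⟨Real.neg_one_le_sin _, Real.sin_le_one _⟩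
      have t1 : |twiFr u p * (if twiFu F p < K then twiFr F p else 0) * Real.sin p.1|
          ≤ MUr * MFr := by
        rw [abs_mul, abs_mul]
        calc |twiFr u p| * |(if twiFu F p < K then twiFr F p else 0)| * |Real.sin p.1|
            ≤ MUr * MFr * 1 := by
              apply mul_le_mul _ habs_sin (abs_nonneg _) (by positivity)
              exact mul_le_mul (hMUr p hp) (hDr_bd p hp) (abs_nonneg _) hMUr0
          _ = MUr * MFr := mul_one _
      have t2 : |twiFt u p / Real.sin p.1 * (if twiFu F p < K then twiFt F p else 0)|
          ≤ CUt * MFt := by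
        rw [abs_mul, abs_div, abs_of_pos hs]
        have hq : |twiFt u p| / Real.sin p.1 ≤ CUt := by
          rw [div_le_iff₀ hs]
          exact hCUt p hic1 hic2
        exact mul_le_mul hq (hDt_bd p hp) (abs_nonneg _) hCUt0
      exact add_le_add t1 t2
  -- Tfun agrees a.e. with glim
  have hTae : Tfun =ᵐ[twiNu] glim := by
    filter_upwards [twi_ae_mem, haer, haet] with p hp hnr hnt
    have hUr : deriv (fun s => u s p.2) p.1 = twiFr u p := (twiFr_hasDerivAt hu' p).deriv
    have hUt : deriv (u p.1) p.2 = twiFt u p := (twiFt_hasDerivAt hu' p).deriv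
    rcases lt_trichotomy (twiFu F p) K with hlt | heq | hgt
    · have d1 : deriv (fun s => min (F s p.2) K) p.1 = twiFr F p :=
        twi_deriv_min_of_lt (twiFr_hasDerivAt hF p) hlt
      have d2 : deriv (fun t => min (F p.1 t) K) p.2 = twiFt F p :=
        twi_deriv_min_of_lt (twiFt_hasDerivAt hF p) hlt
      simp only [hT_def, hg_def, hUr, hUt, d1, d2, if_pos hlt]
    · have hFr0 : twiFr F p = 0 := by by_contra h; exact hnr ⟨heq, h⟩
      have hFt0 : twiFt F p = 0 := by by_contra h; exact hnt ⟨heq, h⟩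
      have hdr : HasDerivAt (fun s => F s p.2) 0 p.1 := by
        have := twiFr_hasDerivAt hF p; rwa [hFr0] at this
      have hdt : HasDerivAt (F p.1) 0 p.2 := by
        have := twiFt_hasDerivAt hF p; rwa [hFt0] at this
      have d1 : deriv (fun s => min (F s p.2) K) p.1 = 0 := twi_deriv_min_of_eq hdr heq
      have d2 : deriv (fun t => min (F p.1 t) K) p.2 = 0 := twi_deriv_min_of_eq hdt heq
      simp only [hT_def, hg_def, hUr, hUt, d1, d2, if_neg (lt_irrefl K), heq, hFr0, hFt0]
    · have d1 : deriv (fun s => min (F s p.2) K) p.1 = 0 :=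
        twi_deriv_min_of_gt (twiFr_hasDerivAt hF p).continuousAt hgt
      have d2 : deriv (fun t => min (F p.1 t) K) p.2 = 0 :=
        twi_deriv_min_of_gt (twiFt_hasDerivAt hF p).continuousAt hgt
      simp only [hT_def, hg_def, hUr, hUt, d1, d2, if_neg (not_lt.2 hgt.le)]
  have hT_int : Integrable Tfun twiNu := hglim_int.congr hTae.symm
  -- dominated convergence
  have hDCT : Tendsto (fun n => ∫ p, twiIn F u K (e n) p ∂twiNu) atTop
      (nhds (∫ p, Tfun p ∂twiNu)) := by
    refine tendsto_integral_of_dominated_convergence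
      (fun _ => MUr * MFr + CUt * MFt) hIn_meas (integrable_const _)
      (fun n => by
        filter_upwards [twi_ae_mem] with p hp
        simpa [Real.norm_eq_abs] using hIn_bd n p hp) ?_
    filter_upwards [twi_ae_mem, haer, haet] with p hp hnr hnt
    have h1 := twi_claim_r (K := K) hF hnr
    have h2 := twi_claim_t (K := K) hF hnt
    have hUr : deriv (fun s => u s p.2) p.1 = twiFr u p := (twiFr_hasDerivAt hu' p).deriv
    have hUt : deriv (u p.1) p.2 = twiFt u p := (twiFt_hasDerivAt hu' p).deriv
    have h3 := (((tendsto_const_nhds (x := twiFr u p) (f := atTop)).mul h1).add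
      ((tendsto_const_nhds (x := 1 / Real.sin p.1 ^ 2 * twiFt u p) (f := atTop)).mul h2)).mul_const
      (Real.sin p.1)
    simp only [hT_def, hUr, hUt]
    exact h3
  -- conclusion
  have hconvT : sphereIntegral (fun r θ =>
      deriv (fun s => u s θ) r * deriv (fun s => min (F s θ) K) r
        + (1 / Real.sin r ^ 2) * deriv (u r) θ * deriv (fun t => min (F r t) K) θ)
      = ∫ p, Tfun p ∂twiNu := twi_sphereIntegral_eq hT_int
  have hconvR : sphereIntegral (fun r θ => u r θ * min (F r θ) K)
      = ∫ p, u p.1 p.2 * min (F p.1 p.2) K * Real.sin p.1 ∂twiNu :=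
    twi_sphereIntegral_eq hR_int
  rw [hconvT, hconvR]
  have hx : Tendsto (fun n => -(∫ p, twiIn F u K (e n) p ∂twiNu)) atTop
      (nhds (-(∫ p, Tfun p ∂twiNu))) := hDCT.neg
  have hyz : Tendsto (fun n : ℕ => e n / 2 * CU) atTop (nhds 0) := by
    have h := (tendsto_one_div_add_atTop_nhds_zero_nat.div_const 2).mul_const CU
    show Tendsto (fun n : ℕ => (1/((n:ℝ)+1)) / 2 * CU) atTop (nhds 0)
    simpa using h
  have hy : Tendsto (fun n => (∫ p, u p.1 p.2 * min (F p.1 p.2) K * Real.sin p.1 ∂twiNu)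
      + e n / 2 * CU) atTop
      (nhds (∫ p, u p.1 p.2 * min (F p.1 p.2) K * Real.sin p.1 ∂twiNu)) := by
    have h := tendsto_const_nhds
      (x := ∫ p, u p.1 p.2 * min (F p.1 p.2) K * Real.sin p.1 ∂twiNu) (f := atTop (α := ℕ)) |>.add hyz
    rwa [add_zero] at h
  refine le_of_tendsto_of_tendsto' hx hy ?_
  intro n
  rw [hgreen n, neg_neg]
  exact (hLnRn n).trans (hRnR n)
end

section
/- Let h : S¹ → (0,∞) be a smooth function such that the warped product S¹ ×_h S² with metric g_{S¹} + h² g_{S²} has nonnegative scalar curvature, i.e. −4 h''/h + 2(1 − (h')²)/h² ≥ 0 pointwise. Then |h'| ≤ 1 everywhere on S¹. -/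
open Real
open scoped ContDiff

/-- Auxiliary: a smooth periodic function whose second derivative is negative
wherever its first derivative exceeds `1` has derivative bounded above by `1`. -/
lemma aux_deriv_le_one (h : ℝ → ℝ) (hsmooth : ContDiff ℝ (⊤ : ℕ∞) h)
    (hper : Function.Periodic h (2*π))
    (hkey : ∀ t, 1 < deriv h t → deriv (deriv h) t < 0) :
    ∀ t, deriv h t ≤ 1 := by
  have hinf : ContDiff ℝ ∞ h := hsmooth.of_le (by simp)
  have hdiff : Differentiable ℝ h := hsmooth.differentiable (by simp)
  have hsmooth' : ContDiff ℝ ∞ (deriv h) := (contDiff_infty_iff_deriv.mp hinf).2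
  have hdiff' : Differentiable ℝ (deriv h) := hsmooth'.differentiable (by simp)
  have hcont' : Continuous (deriv h) := hdiff'.continuous
  by_contra hcon
  push_neg at hcon
  obtain ⟨t₀, ht₀⟩ := hcon
  -- find a point `c0 < t₀` with `deriv h c0 = 0` via the mean value theorem over a period
  have hlt : t₀ - 2*π < t₀ := by
    have := Real.pi_pos; linarith
  obtain ⟨c0, hc0mem, hc0⟩ := exists_deriv_eq_slope h hlt
    (hdiff.continuous.continuousOn) (hdiff.differentiableOn)
  have hc0z : deriv h c0 = 0 := by
    rw [hc0]
    have : h (t₀ - 2*π) = h t₀ := by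
      have := hper (t₀ - 2*π)
      simp only [sub_add_cancel] at this
      exact this.symm
    rw [this]; simp
  -- the set of points in `[c0, t₀]` where `deriv h ≤ 1`
  set S : Set ℝ := Set.Icc c0 t₀ ∩ (deriv h) ⁻¹' (Set.Iic 1) with hS
  have hSclosed : IsClosed S := (isClosed_Icc).inter (isClosed_Iic.preimage hcont')
  have hSne : S.Nonempty := ⟨c0, ⟨le_refl _, hc0mem.2.le⟩, by simp [hc0z]⟩
  have hSbdd : BddAbove S := ⟨t₀, fun x hx => hx.1.2⟩
  set s := sSup S with hs
  have hsmem : s ∈ S := hSclosed.csSup_mem hSne hSbdd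
  have hs1 : deriv h s ≤ 1 := hsmem.2
  have hslt : s < t₀ := lt_of_le_of_ne hsmem.1.2 (by
    intro he; rw [he] at hs1; linarith)
  -- on `(s, t₀]`, `deriv h > 1`
  have hgt : ∀ x ∈ Set.Ioc s t₀, 1 < deriv h x := by
    intro x hx
    by_contra hle
    push_neg at hle
    have hxS : x ∈ S := ⟨⟨le_trans hsmem.1.1 hx.1.le, hx.2⟩, hle⟩
    exact absurd (le_csSup hSbdd hxS) (not_le.mpr hx.1)
  -- MVT for `deriv h` on `[s, t₀]`
  obtain ⟨c, hcmem, hc⟩ := exists_deriv_eq_slope (deriv h) hslt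
    (hcont'.continuousOn) (hdiff'.differentiableOn)
  have hc1 : 1 < deriv h c := hgt c ⟨hcmem.1, hcmem.2.le⟩
  have hcpos : 0 < deriv (deriv h) c := by
    rw [hc]
    apply div_pos _ (by linarith [hcmem.1, hcmem.2, hslt])
    have := hgt t₀ ⟨hslt, le_refl _⟩
    linarith
  exact absurd (hkey c hc1) (not_lt.mpr hcpos.le)

/- `h : S¹ → (0,∞)` is encoded as a smooth positive `2π`-periodic function on `ℝ`
(arc-length parameter).  The scalar curvature of the warped product metric
`g_{S¹} + h² g_{S²}` on `S¹ × S²` equals `−4 h''/h + 2(1 − (h')²)/h²`. -/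

/-- If the warped product `S¹ ×_h S²` has nonnegative scalar curvature,
i.e. `−4 h''/h + 2(1 − (h')²)/h² ≥ 0` pointwise, then `|h'| ≤ 1` everywhere on `S¹`. -/
theorem gradient_bound_of_nonneg_scalar (h : ℝ → ℝ)
    (hsmooth : ContDiff ℝ (⊤ : ℕ∞) h)
    (hper : Function.Periodic h (2*π))
    (hpos : ∀ t, 0 < h t)
    (hscal : ∀ t, 0 ≤ -4 * (deriv (deriv h) t) / h t + 2 * (1 - (deriv h t)^2) / (h t)^2) :
    ∀ t, |deriv h t| ≤ 1 := by
  -- the key pointwise inequality `2 h h'' ≤ 1 - (h')²`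
  have key : ∀ t, 2 * h t * deriv (deriv h) t ≤ 1 - (deriv h t)^2 := by
    intro t
    have hp := hpos t
    have hs := hscal t
    have h2 : (0:ℝ) < (h t)^2 := by positivity
    have hmul := mul_nonneg hs h2.le
    have e : (-4 * (deriv (deriv h) t) / h t + 2 * (1 - (deriv h t)^2) / (h t)^2) * (h t)^2
        = -4 * deriv (deriv h) t * h t + 2 * (1 - (deriv h t)^2) := by
      field_simp
    rw [e] at hmul
    nlinarith
  have hkey : ∀ t, 1 < (deriv h t)^2 → deriv (deriv h) t < 0 := by
    intro t ht
    have := key t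
    nlinarith [hpos t]
  -- upper bound from the auxiliary lemma applied to `h`
  have hub : ∀ t, deriv h t ≤ 1 := by
    apply aux_deriv_le_one h hsmooth hper
    intro t ht
    exact hkey t (by nlinarith)
  -- lower bound from the auxiliary lemma applied to `g t = h (-t)`
  set g : ℝ → ℝ := fun t => h (-t) with hg
  have hgsmooth : ContDiff ℝ (⊤ : ℕ∞) g := hsmooth.comp contDiff_neg
  have hgper : Function.Periodic g (2*π) := by
    intro t
    have := hper (-t - 2*π)
    simp only [hg]
    have e : -t - 2*π + 2*π = -t := by ring
    rw [e] at this
    rw [show -(t + 2*π) = -t - 2*π by ring, this]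
  have hgd : deriv g = fun t => -(deriv h (-t)) := by
    funext t
    exact deriv_comp_neg h t
  have hgd2 : ∀ t, deriv (deriv g) t = deriv (deriv h) (-t) := by
    intro t
    rw [hgd]
    have : deriv (fun t => -(deriv h (-t))) t = -(deriv (fun t => deriv h (-t)) t) := by
      simp [deriv.neg]
    rw [this, deriv_comp_neg (deriv h)]
    ring
  have hgkey : ∀ t, 1 < deriv g t → deriv (deriv g) t < 0 := by
    intro t ht
    rw [hgd2]
    rw [hgd] at ht
    simp only at ht
    exact hkey (-t) (by nlinarith)
  have hlb : ∀ t, -1 ≤ deriv h t := by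
    intro t
    have := aux_deriv_le_one g hgsmooth hgper hgkey (-t)
    rw [hgd] at this
    simp only [neg_neg] at this
    linarith
  intro t
  rw [abs_le]
  exact ⟨hlb t, hub t⟩
end
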